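/- For all n ≥ 0, |#D_n − #E_n| = 1, where D_n is the set of derangements of [n] and E_n is the set of permutations of [n] with exactly one fixed point. -/
import Mathlib

noncomputable def numD (n : ℕ) : ℕ := Nat.card {σ : Equiv.Perm (Fin n) // ∀ i, σ i ≠ i}
noncomputable def numE (n : ℕ) : ℕ := Nat.card {σ : Equiv.Perm (Fin n) // ∃! i, σ i = i}

open Equiv Function derangements Fintype

open scoped Classical

section aux

variable {α : Type*} [Fintype α] [DecidableEq α]

/-- The number of permutations with fixed point set exactly `{a}` equals the number of
derangements of the complement of `{a}`. -/
lemma card_fixed_eq (a : α) :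
    Nat.card {f : Perm α // fixedPoints f = {a}} =
      Nat.card (derangements ({a}ᶜ : Set α)) := by
  have h1 : Nat.card {f : Perm α // fixedPoints f ⊆ {a}} =
      Nat.card (derangements ({a}ᶜ : Set α)) + Nat.card (derangements α) := by
    rw [Nat.card_congr (atMostOneFixedPointEquivSum_derangements a), Nat.card_sum]
  have h2 : Nat.card {f : Perm α // fixedPoints f ⊆ {a}} =
      Nat.card {f : Perm α // fixedPoints f = {a}} +
        Nat.card {f : Perm α // fixedPoints f = ∅} := by
    have he : {f : Perm α // fixedPoints f ⊆ {a}} ≃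
        {f : Perm α // fixedPoints f = {a} ∨ fixedPoints f = ∅} := by
      apply subtypeEquivRight
      intro f
      rw [Set.subset_singleton_iff_eq]
      tauto
    rw [Nat.card_congr he, Nat.card_eq_fintype_card, Nat.card_eq_fintype_card,
      Nat.card_eq_fintype_card]
    apply Fintype.card_subtype_or_disjoint
    rintro p hp hq f hf
    have h := (hp f hf).symm.trans (hq f hf)
    simp only [Set.ext_iff] at h
    simpa using h a
  have h3 : Nat.card {f : Perm α // fixedPoints f = ∅} =
      Nat.card (derangements α) := by
    apply Nat.card_congr
    exact (subtypeEquivRight fun f => mem_derangements_iff_fixedPoints_eq_empty).symm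
  omega

/-- Permutations with exactly one fixed point, as a sigma type over the fixed point. -/
noncomputable def oneFixedEquiv :
    {σ : Perm α // ∃! i, σ i = i} ≃ Σ a : α, {f : Perm α // fixedPoints f = {a}} where
  toFun σ := ⟨σ.2.choose, σ.1, by
    obtain ⟨h1, h2⟩ := σ.2.choose_spec
    rw [Set.eq_singleton_iff_unique_mem]
    exact ⟨h1, fun x hx => h2 x hx⟩⟩
  invFun x := ⟨x.2.1, x.1, by
    have h1 : x.1 ∈ fixedPoints (x.2.1 : Perm α) := by rw [x.2.2]; rfl
    refine ⟨h1, fun y hy => ?_⟩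
    have h2 : y ∈ fixedPoints (x.2.1 : Perm α) := hy
    rw [x.2.2] at h2
    exact h2⟩
  left_inv σ := Subtype.ext rfl
  right_inv x := by
    refine Sigma.subtype_ext ?_ rfl
    obtain ⟨a, f, hf⟩ := x
    have h1 : a ∈ fixedPoints f := by rw [hf]; rfl
    obtain ⟨hc1, hc2⟩ :=
      (⟨f, a, h1, fun y hy => by have : y ∈ fixedPoints f := hy; rwa [hf] at this⟩ :
        {σ : Perm α // ∃! i, σ i = i}).2.choose_spec
    exact (hc2 a h1).symm

lemma card_oneFixed :
    Nat.card {σ : Perm α // ∃! i, σ i = i} =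
      Fintype.card α * numDerangements (Fintype.card α - 1) := by
  rw [Nat.card_congr (oneFixedEquiv (α := α)), Nat.card_eq_fintype_card, Fintype.card_sigma]
  have h : ∀ a : α, Fintype.card {f : Perm α // fixedPoints f = {a}} =
      numDerangements (Fintype.card α - 1) := by
    intro a
    rw [← Nat.card_eq_fintype_card, card_fixed_eq a, Nat.card_eq_fintype_card,
      card_derangements_eq_numDerangements]
    congr 1
    rw [Fintype.card_compl_set]
    simp
  simp [h, Finset.sum_const, mul_comm]

end aux

lemma numD_eq (n : ℕ) : numD n = numDerangements n := by
  have h : numD n = Nat.card (derangements (Fin n)) :=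
    Nat.card_congr (Equiv.subtypeEquivRight fun f => Iff.rfl)
  rw [h, Nat.card_eq_fintype_card, card_derangements_fin_eq_numDerangements]

lemma numE_eq (n : ℕ) : numE (n + 1) = (n + 1) * numDerangements n := by
  rw [numE, card_oneFixed]
  simp

theorem abs_diff_derangements_one_fixed_point (n : ℕ) :
    |(numD n : ℤ) - (numE n : ℤ)| = 1 := by
  cases n with
  | zero =>
    have hD : numD 0 = 1 := by rw [numD_eq]; rfl
    have hE : numE 0 = 0 := by
      rw [numE, Nat.card_eq_zero]
      left
      constructor
      intro σ
      exact (σ.2.exists.choose).elim0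
    rw [hD, hE]
    norm_num
  | succ m =>
    rw [numD_eq, numE_eq]
    have h := numDerangements_succ m
    push_cast
    rw [h]
    have : ((m : ℤ) + 1) * (numDerangements m : ℤ) - (-1) ^ m -
        ((m : ℤ) + 1) * (numDerangements m : ℤ) = -(-1) ^ m := by ring
    rw [this, abs_neg, abs_pow, abs_neg, abs_one, one_pow]
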